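/- Let C be an oriented linear chord diagram of d chords and let 0 ≤ ℓ ≤ 2d. Then ⟨C_−^ℓ⟩ = (−A⁻³)·⟨C⟩, where C_−^ℓ is the diagram of d+1 chords obtained from C by replacing every entry i of a chord by i if i ≤ ℓ and by i+2 if i > ℓ, and adjoining the negative chord (ℓ+2, ℓ+1). -/

import Mathlib

open Equiv LaurentPolynomial Finset

/-- `C` is an oriented linear chord diagram of `d` chords: a set of `d` ordered pairs of
integers whose entries (first and second components together) are exactly `{1, …, 2d}`.
(Together with `C.card = d` this forces all `2d` entries to be pairwise distinct.) -/
def IsOLCD (d : ℕ) (C : Finset (ℤ × ℤ)) : Prop :=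
  C.card = d ∧ (C.image Prod.fst ∪ C.image Prod.snd) = Finset.Icc 1 (2 * (d : ℤ))

/-- The set `R_c` of transpositions of `ℤ` associated to a chord `c = (i, j)` carrying the
label `lbl` (`true` = `A`, `false` = `B`). -/
def Rset (lbl : Bool) (c : ℤ × ℤ) : Set (Equiv.Perm ℤ) :=
  if lbl = decide (c.1 < c.2) then
    {Equiv.swap c.1 (c.2 - 1), Equiv.swap (c.1 - 1) c.2}
  else
    {Equiv.swap c.1 c.2, Equiv.swap (c.1 - 1) (c.2 - 1)}

/-- The subgroup of permutations generated by `⋃_{c ∈ C} R_c`, for a state `s` of `C`. -/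
def stateGroup (C : Finset (ℤ × ℤ)) (s : {c // c ∈ C} → Bool) : Subgroup (Equiv.Perm ℤ) :=
  Subgroup.closure (⋃ c : {c // c ∈ C}, Rset (s c) c.1)

/-- `Γ_s`: the number of orbits of the action of `stateGroup C s` on `{0, 1, …, 2d}`,
counted as the number of distinct orbits of elements of `{0, …, 2d}`. -/
noncomputable def Gamma (d : ℕ) (C : Finset (ℤ × ℤ)) (s : {c // c ∈ C} → Bool) : ℕ :=
  ((fun x : ℤ => MulAction.orbit (stateGroup C s) x) '' Set.Icc (0 : ℤ) (2 * d)).ncard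

/-- `⟨C|s⟩ = A^(|s⁻¹(A)| - |s⁻¹(B)|) * (-A² - A⁻²)^(Γ_s - 1)`. -/
noncomputable def bracketTerm (d : ℕ) (C : Finset (ℤ × ℤ)) (s : {c // c ∈ C} → Bool) :
    LaurentPolynomial ℤ :=
  T (((Finset.univ.filter fun c => s c = true).card : ℤ) -
      ((Finset.univ.filter fun c => s c = false).card : ℤ)) *
    (-T 2 - T (-2)) ^ (Gamma d C s - 1)

/-- The bracket polynomial `⟨C⟩ = Σ_s ⟨C|s⟩`, summing over all `2^d` states of `C`. -/
noncomputable def bracket (d : ℕ) (C : Finset (ℤ × ℤ)) : LaurentPolynomial ℤ :=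
  ∑ s : ({c // c ∈ C} → Bool), bracketTerm d C s

/-- The maximal exponent occurring in a Laurent polynomial (junk value `0` for `f = 0`). -/
noncomputable def maxDeg (f : LaurentPolynomial ℤ) : ℤ := WithBot.unbotD 0 f.coeff.support.max

/-- The minimal exponent occurring in a Laurent polynomial (junk value `0` for `f = 0`). -/
noncomputable def minDeg (f : LaurentPolynomial ℤ) : ℤ := WithTop.untopD 0 f.coeff.support.min

/-- The span of a Laurent polynomial: maximal minus minimal exponent. -/
noncomputable def spanL (f : LaurentPolynomial ℤ) : ℤ := maxDeg f - minDeg f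

/-!
Index the chords of `C₋^ℓ` by `Option` of the chords of `C`, the new chord being `none`; a state
of `C₋^ℓ` is then a state `s` of `C` together with a label `b` of the monogon. The transpositions
of a chord `c` are `swap (c.1 - δ.1) (c.2 - δ.2)` for two offsets `δ ∈ {0, 1}²` depending only on
the label and the orientation of `c`, and the shift `x ↦ if x ≤ ℓ then x else x + 2` preserves
orientations. Hence two points lie in the same orbit for `s` iff their shifts do for the extended
state, the two new points `ℓ + 1, ℓ + 2` join the orbit of `ℓ`, except that under label `B` the
point `ℓ + 1` is fixed and forms an orbit of its own. So `Γ` grows by `0` for `A` and by `1` for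
`B`, and `A^(n+1) + A^(n-1) (-A² - A⁻²) = -A⁻³ A^n`.
-/

section SmoothingGroup

variable {ι : Type*} (chord : ι → ℤ × ℤ) (lbl : ι → Bool)

def smoothingOffsets (l : Bool) (c : ℤ × ℤ) : Set (ℤ × ℤ) :=
  if l = decide (c.1 < c.2) then {(0, 1), (1, 0)} else {(0, 0), (1, 1)}

lemma Rset_eq_image (l : Bool) (c : ℤ × ℤ) :
    Rset l c = (fun δ : ℤ × ℤ => swap (c.1 - δ.1) (c.2 - δ.2)) '' smoothingOffsets l c := by
  unfold Rset smoothingOffsets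
  split_ifs <;> simp [Set.image_insert_eq]

lemma smoothingOffsets_subset (l : Bool) (c : ℤ × ℤ) :
    smoothingOffsets l c ⊆ Set.Icc 0 1 ×ˢ Set.Icc 0 1 := by
  unfold smoothingOffsets
  split_ifs <;> simp [Set.insert_subset_iff]

def smoothingGroup : Subgroup (Perm ℤ) :=
  Subgroup.closure (⋃ i, Rset (lbl i) (chord i))

lemma stateGroup_eq_smoothingGroup {C : Finset (ℤ × ℤ)} (s : {c // c ∈ C} → Bool)
    (e : ι ≃ {c // c ∈ C}) : stateGroup C s = smoothingGroup (fun i => (e i).1) (s ∘ e) :=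
  congrArg Subgroup.closure (e.surjective.iUnion_comp fun c => Rset (s c) c.1).symm

variable {chord lbl}

lemma orbit_smoothingGroup_eq {i : ι} {δ : ℤ × ℤ} (hδ : δ ∈ smoothingOffsets (lbl i) (chord i)) :
    MulAction.orbit (smoothingGroup chord lbl) ((chord i).1 - δ.1) =
      MulAction.orbit (smoothingGroup chord lbl) ((chord i).2 - δ.2) := by
  have hmem : swap ((chord i).1 - δ.1) ((chord i).2 - δ.2) ∈ smoothingGroup chord lbl :=
    Subgroup.subset_closure (Set.mem_iUnion.2 ⟨i, Rset_eq_image _ _ ▸ ⟨δ, hδ, rfl⟩⟩)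
  rw [← MulAction.orbit_smul (⟨_, hmem⟩ : smoothingGroup chord lbl)]
  simp

lemma apply_eq_of_orbit_smoothingGroup_eq {β : Type*} {f : ℤ → β}
    (hf : ∀ i, ∀ δ ∈ smoothingOffsets (lbl i) (chord i),
      f ((chord i).1 - δ.1) = f ((chord i).2 - δ.2))
    {x y : ℤ} (h : MulAction.orbit (smoothingGroup chord lbl) x =
      MulAction.orbit (smoothingGroup chord lbl) y) : f x = f y := by
  obtain ⟨⟨g, hg⟩, rfl⟩ := MulAction.orbit_eq_iff.1 h
  change f (g y) = f y
  clear h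
  induction hg using Subgroup.closure_induction generalizing y with
  | mem g hg =>
    obtain ⟨i, hi⟩ := Set.mem_iUnion.1 hg
    obtain ⟨δ, hδ, rfl⟩ := (Rset_eq_image _ _ ▸ hi : g ∈ _ '' _)
    rcases eq_or_ne y ((chord i).1 - δ.1) with rfl | h1
    · rw [swap_apply_left, hf i δ hδ]
    rcases eq_or_ne y ((chord i).2 - δ.2) with rfl | h2
    · rw [swap_apply_right, hf i δ hδ]
    · rw [swap_apply_of_ne_of_ne h1 h2]
  | one => rfl
  | mul g h _ _ hg hh => exact hg.trans hh
  | inv g _ hg => simpa using (hg (y := g⁻¹ y)).symm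

end SmoothingGroup

section Shift

variable (ℓ : ℤ)

def shiftAbove (x : ℤ) : ℤ := if x ≤ ℓ then x else x + 2

def unshift (x : ℤ) : ℤ := if x ≤ ℓ then x else if x = ℓ + 1 then ℓ else x - 2

variable {ℓ}

lemma shiftAbove_lt_shiftAbove_iff {x y : ℤ} : shiftAbove ℓ x < shiftAbove ℓ y ↔ x < y := by
  unfold shiftAbove; split_ifs <;> omega

lemma smoothingOffsets_map_shiftAbove (l : Bool) (c : ℤ × ℤ) :
    smoothingOffsets l (Prod.map (shiftAbove ℓ) (shiftAbove ℓ) c) = smoothingOffsets l c := by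
  simp only [smoothingOffsets, Prod.map_fst, Prod.map_snd, shiftAbove_lt_shiftAbove_iff]

lemma shiftAbove_sub_ne {δ : ℤ} (hδ : δ ∈ Set.Icc 0 1) (x : ℤ) : shiftAbove ℓ x - δ ≠ ℓ + 1 := by
  have := hδ.1; have := hδ.2; unfold shiftAbove; split_ifs <;> omega

lemma unshift_shiftAbove_sub {δ : ℤ} (hδ : δ ∈ Set.Icc 0 1) (x : ℤ) :
    unshift ℓ (shiftAbove ℓ x - δ) = x - δ := by
  have := hδ.1; have := hδ.2; unfold unshift shiftAbove; split_ifs <;> omega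

lemma unshift_of_mem_Icc {z : ℤ} (hz : z ∈ Set.Icc ℓ (ℓ + 2)) : unshift ℓ z = ℓ := by
  have := hz.1; have := hz.2; unfold unshift; split_ifs <;> omega

lemma shiftAbove_sub_eq_or {δ : ℤ} (hδ : δ ∈ Set.Icc 0 1) (x : ℤ) :
    shiftAbove ℓ x - δ = shiftAbove ℓ (x - δ) ∨
      shiftAbove ℓ x - δ = ℓ + 2 ∧ shiftAbove ℓ (x - δ) = ℓ := by
  have := hδ.1; have := hδ.2; unfold shiftAbove; split_ifs <;> omega

lemma shiftAbove_ne (x : ℤ) : shiftAbove ℓ x ≠ ℓ + 1 := by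
  simpa using shiftAbove_sub_ne (δ := 0) ⟨le_rfl, zero_le_one⟩ x

lemma unshift_shiftAbove (x : ℤ) : unshift ℓ (shiftAbove ℓ x) = x := by
  simpa using unshift_shiftAbove_sub (δ := 0) ⟨le_rfl, zero_le_one⟩ x

lemma Icc_eq_image_shiftAbove_union {n : ℤ} (hℓ0 : 0 ≤ ℓ) (hℓ : ℓ ≤ n) :
    Set.Icc 0 (n + 2) = shiftAbove ℓ '' Set.Icc 0 n ∪ {ℓ + 1, ℓ + 2} := by
  ext z
  simp only [Set.mem_union, Set.mem_image, Set.mem_Icc, Set.mem_insert_iff,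
    Set.mem_singleton_iff, shiftAbove]
  constructor
  · intro hz
    by_cases h : z ≤ ℓ
    · exact Or.inl ⟨z, by omega, if_pos h⟩
    by_cases h' : z ≤ ℓ + 2
    · omega
    · exact Or.inl ⟨z - 2, by omega, by rw [if_neg (by omega)]; ring⟩
  · rintro (⟨x, hx, rfl⟩ | rfl | rfl) <;> (try split_ifs) <;> omega

end Shift

lemma ncard_image_congr {α β γ : Type*} {I : Set α} (hI : I.Finite) {f : α → β} {g : α → γ}
    (h : ∀ x y, f x = f y ↔ g x = g y) : (f '' I).ncard = (g '' I).ncard := by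
  induction I, hI using Set.Finite.induction_on with
  | empty => simp
  | @insert a I _ hI ih =>
    have hmem : f a ∈ f '' I ↔ g a ∈ g '' I := by
      simp only [Set.mem_image, h]
    rw [Set.image_insert_eq, Set.image_insert_eq]
    by_cases ha : f a ∈ f '' I
    · rw [Set.insert_eq_of_mem ha, Set.insert_eq_of_mem (hmem.1 ha), ih]
    · rw [Set.ncard_insert_of_notMem ha (hI.image f),
        Set.ncard_insert_of_notMem (hmem.not.1 ha) (hI.image g), ih]

section Bracket

lemma card_filter_true_sub_card_filter_false {α : Type*} [Fintype α] (s : α → Bool) :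
    ((univ.filter fun a => s a = true).card : ℤ) - (univ.filter fun a => s a = false).card =
      ∑ a, if s a then 1 else -1 := by
  rw [natCast_card_filter, natCast_card_filter, ← sum_sub_distrib]
  exact sum_congr rfl fun a _ => by cases s a <;> rfl

lemma one_le_Gamma (d : ℕ) (C : Finset (ℤ × ℤ)) (s : {c // c ∈ C} → Bool) : 1 ≤ Gamma d C s :=
  (Set.ncard_pos ((Set.finite_Icc _ _).image _)).2
    ((Set.nonempty_Icc.2 (by positivity)).image _)

lemma T_add_one_add_T_sub_one_mul (n : ℤ) :
    (T (n + 1) + T (n - 1) * (-T 2 - T (-2)) : LaurentPolynomial ℤ) = -T (-3) * T n := by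
  have h₁ : (T (-1) * T 2 : LaurentPolynomial ℤ) = T 1 := by rw [← T_add]; norm_num
  have h₂ : (T (-1) * T (-2) : LaurentPolynomial ℤ) = T (-3) := by rw [← T_add]; norm_num
  rw [T_add, sub_eq_add_neg, T_add]
  linear_combination (-T n) * h₁ - T n * h₂

variable {d d' : ℕ} {C C' : Finset (ℤ × ℤ)} (e : Option {c // c ∈ C} ≃ {c // c ∈ C'})

def extendState (b : Bool) (s : {c // c ∈ C} → Bool) (c' : {c // c ∈ C'}) : Bool :=
  (e.symm c').elim b s

lemma card_filter_extendState (b : Bool) (s : {c // c ∈ C} → Bool) :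
    ((univ.filter fun c => extendState e b s c = true).card : ℤ) -
        (univ.filter fun c => extendState e b s c = false).card =
      ((univ.filter fun c => s c = true).card : ℤ) - (univ.filter fun c => s c = false).card +
        if b then 1 else -1 := by
  rw [card_filter_true_sub_card_filter_false, card_filter_true_sub_card_filter_false,
    ← (e.sum_comp _), Fintype.sum_option]
  simp only [extendState, Equiv.symm_apply_apply, Option.elim_none, Option.elim_some]
  ring

lemma bracket_eq_of_Gamma_extendState
    (hΓ : ∀ b s, Gamma d' C' (extendState e b s) = Gamma d C s + if b then 0 else 1) :
    bracket d' C' = -T (-3) * bracket d C := by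
  have hstates : bracket d' C' = ∑ s, ∑ b, bracketTerm d' C' (extendState e b s) := by
    rw [bracket, ← Fintype.sum_equiv
      (Equiv.piOptionEquivProd.symm.trans (e.arrowCongr (Equiv.refl Bool)))
      (fun p => bracketTerm d' C' (extendState e p.1 p.2)) _
      fun p => congrArg _ <| funext fun c => by cases h : e.symm c <;> simp [extendState, h],
      Fintype.sum_prod_type, Finset.sum_comm]
  rw [hstates, bracket, mul_sum]
  refine sum_congr rfl fun s _ => ?_
  have hΓ₀ := one_le_Gamma d C s
  rw [Fintype.sum_bool, bracketTerm, bracketTerm, card_filter_extendState, card_filter_extendState,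
    hΓ, hΓ, bracketTerm, if_pos rfl, if_neg Bool.false_ne_true, if_pos rfl, if_neg Bool.false_ne_true,
    add_zero, show Gamma d C s + 1 - 1 = Gamma d C s - 1 + 1 by omega, pow_succ]
  rw [← sub_eq_add_neg]
  linear_combination (-T 2 - T (-2)) ^ (Gamma d C s - 1) * T_add_one_add_T_sub_one_mul
    (((univ.filter fun c => s c = true).card : ℤ) - (univ.filter fun c => s c = false).card)

end Bracket

namespace NegMonogon

variable {κ : Type*} (ℓ : ℤ) (γ : κ → ℤ × ℤ)

def chord (o : Option κ) : ℤ × ℤ :=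
  o.elim (ℓ + 2, ℓ + 1) (Prod.map (shiftAbove ℓ) (shiftAbove ℓ) ∘ γ)

variable (b : Bool) (s : κ → Bool)

def label (o : Option κ) : Bool := o.elim b s

variable {ℓ γ b s}

local notation "𝒪" => MulAction.orbit (smoothingGroup (chord ℓ γ) (label b s))

lemma orbit_monogon_eq {δ : ℤ × ℤ} (hδ : δ ∈ smoothingOffsets b (ℓ + 2, ℓ + 1)) :
    𝒪 (ℓ + 2 - δ.1) = 𝒪 (ℓ + 1 - δ.2) :=
  orbit_smoothingGroup_eq (i := none) hδ

lemma orbit_add_one (hb : b = true) : 𝒪 (ℓ + 1) = 𝒪 ℓ := by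
  subst hb
  have h := orbit_monogon_eq (ℓ := ℓ) (γ := γ) (s := s) (b := true) (δ := (1, 1))
    (by simp [smoothingOffsets])
  rwa [show ℓ + 2 - 1 = ℓ + 1 by ring, add_sub_cancel_right] at h

lemma orbit_add_two : 𝒪 (ℓ + 2) = 𝒪 ℓ := by
  cases b with
  | false =>
    simpa using orbit_monogon_eq (ℓ := ℓ) (γ := γ) (s := s) (b := false) (δ := (0, 1))
      (by simp [smoothingOffsets])
  | true =>
    have h := orbit_monogon_eq (ℓ := ℓ) (γ := γ) (s := s) (b := true) (δ := (0, 0))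
      (by simp [smoothingOffsets])
    simpa [orbit_add_one] using h

local notation "𝒪₀" => MulAction.orbit (smoothingGroup γ s)

lemma orbit_shiftAbove_sub {δ : ℤ} (hδ : δ ∈ Set.Icc 0 1) (x : ℤ) :
    𝒪 (shiftAbove ℓ x - δ) = 𝒪 (shiftAbove ℓ (x - δ)) := by
  rcases shiftAbove_sub_eq_or hδ x with h | ⟨h₁, h₂⟩
  · rw [h]
  · rw [h₁, h₂, orbit_add_two]

lemma orbit_shiftAbove_eq_of_orbit_eq {x y : ℤ} (h : 𝒪₀ x = 𝒪₀ y) :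
    𝒪 (shiftAbove ℓ x) = 𝒪 (shiftAbove ℓ y) := by
  refine apply_eq_of_orbit_smoothingGroup_eq (f := fun z => 𝒪 (shiftAbove ℓ z)) ?_ h
  intro i δ hδ
  obtain ⟨hδ₁, hδ₂⟩ := smoothingOffsets_subset _ _ hδ
  have hδ' : δ ∈ smoothingOffsets (label b s (some i)) (chord ℓ γ (some i)) :=
    (smoothingOffsets_map_shiftAbove _ _).symm ▸ hδ
  rw [← orbit_shiftAbove_sub hδ₁, ← orbit_shiftAbove_sub hδ₂]
  exact orbit_smoothingGroup_eq hδ'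

lemma orbit_eq_of_orbit_shiftAbove_eq {x y : ℤ} (h : 𝒪 (shiftAbove ℓ x) = 𝒪 (shiftAbove ℓ y)) :
    𝒪₀ x = 𝒪₀ y := by
  suffices H : 𝒪₀ (unshift ℓ (shiftAbove ℓ x)) = 𝒪₀ (unshift ℓ (shiftAbove ℓ y)) by
    rwa [unshift_shiftAbove, unshift_shiftAbove] at H
  -- `unshift` collapses the monogon's points `ℓ, ℓ + 1, ℓ + 2` onto `ℓ`.
  refine apply_eq_of_orbit_smoothingGroup_eq (f := fun z => 𝒪₀ (unshift ℓ z)) ?_ h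
  rintro (_ | i) δ hδ <;> obtain ⟨⟨hδ₁, hδ₁'⟩, hδ₂, hδ₂'⟩ := smoothingOffsets_subset _ _ hδ
  · simp only [chord, Option.elim_none]
    rw [unshift_of_mem_Icc ⟨by linarith, by linarith⟩, unshift_of_mem_Icc ⟨by linarith, by linarith⟩]
  · simp only [chord, label, Option.elim_some, Function.comp_apply,
      smoothingOffsets_map_shiftAbove] at hδ ⊢
    rw [Prod.map_fst, Prod.map_snd, unshift_shiftAbove_sub ⟨hδ₁, hδ₁'⟩,
      unshift_shiftAbove_sub ⟨hδ₂, hδ₂'⟩]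
    exact orbit_smoothingGroup_eq hδ

lemma orbit_add_one_ne (hb : b = false) (x : ℤ) : 𝒪 (ℓ + 1) ≠ 𝒪 (shiftAbove ℓ x) := by
  intro h
  -- With label `B` the monogon contributes `swap (ℓ + 2) ℓ` and the identity, so no generator
  -- moves `ℓ + 1`.
  have key := apply_eq_of_orbit_smoothingGroup_eq (f := fun z => z = ℓ + 1) ?_ h
  · exact shiftAbove_ne x (cast key rfl)
  rintro (_ | i) δ hδ
  · subst hb
    simp [label, chord, smoothingOffsets] at hδ
    rcases hδ with rfl | rfl <;> simp [chord, add_sub_assoc]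
  · obtain ⟨hδ₁, hδ₂⟩ := smoothingOffsets_subset _ _ hδ
    simp only [chord, Option.elim_some, Function.comp_apply, Prod.map_fst,
      Prod.map_snd]
    rw [eq_false (shiftAbove_sub_ne hδ₁ _), eq_false (shiftAbove_sub_ne hδ₂ _)]

lemma ncard_image_orbit {n : ℤ} (hℓ0 : 0 ≤ ℓ) (hℓ : ℓ ≤ n) :
    ((fun x => 𝒪 x) '' Set.Icc 0 (n + 2)).ncard =
      ((fun x => 𝒪₀ x) '' Set.Icc 0 n).ncard + if b then 0 else 1 := by
  have hcongr : ((fun x => 𝒪 (shiftAbove ℓ x)) '' Set.Icc 0 n).ncard =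
      ((fun x => 𝒪₀ x) '' Set.Icc 0 n).ncard :=
    (ncard_image_congr (Set.finite_Icc 0 n) fun _ _ =>
      ⟨orbit_shiftAbove_eq_of_orbit_eq, orbit_eq_of_orbit_shiftAbove_eq⟩).symm
  have hℓmem : 𝒪 ℓ ∈ (fun x => 𝒪 (shiftAbove ℓ x)) '' Set.Icc 0 n :=
    ⟨ℓ, ⟨hℓ0, hℓ⟩, by simp [shiftAbove]⟩
  have himage : (fun x => 𝒪 x) '' Set.Icc 0 (n + 2) =
      insert (𝒪 (ℓ + 1)) ((fun x => 𝒪 (shiftAbove ℓ x)) '' Set.Icc 0 n) := by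
    rw [Icc_eq_image_shiftAbove_union hℓ0 hℓ, Set.image_union, Set.image_image, Set.image_pair,
      orbit_add_two, Set.union_insert, Set.union_singleton, Set.insert_eq_of_mem hℓmem]
  rw [himage]
  rcases Bool.eq_false_or_eq_true b with hb | hb
  · rw [orbit_add_one hb, Set.insert_eq_of_mem hℓmem, hcongr, hb, if_pos rfl, add_zero]
  · have hnot : 𝒪 (ℓ + 1) ∉ (fun x => 𝒪 (shiftAbove ℓ x)) '' Set.Icc 0 n :=
      fun ⟨x, _, hx⟩ => orbit_add_one_ne hb x hx.symm
    rw [Set.ncard_insert_of_notMem hnot ((Set.finite_Icc 0 n).image _), hcongr, hb]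
    rfl

variable (ℓ : ℤ) (C : Finset (ℤ × ℤ))

def diagram : Finset (ℤ × ℤ) :=
  insert (ℓ + 2, ℓ + 1) (C.image (Prod.map (shiftAbove ℓ) (shiftAbove ℓ)))

lemma chord_mem (o : Option {c // c ∈ C}) :
    chord ℓ Subtype.val o ∈ diagram ℓ C := by
  cases o with
  | none => exact mem_insert_self _ _
  | some c => exact mem_insert_of_mem (mem_image_of_mem _ c.2)

lemma chord_injective {κ : Type*} {γ : κ → ℤ × ℤ} (hγ : Function.Injective γ) :
    Function.Injective (chord ℓ γ) := by
  have hφ : Function.Injective (shiftAbove ℓ) := fun x y h => by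
    simpa [unshift_shiftAbove] using congrArg (unshift ℓ) h
  have hne : ∀ c, Prod.map (shiftAbove ℓ) (shiftAbove ℓ) c ≠ (ℓ + 2, ℓ + 1) :=
    fun c h => shiftAbove_ne c.2 (congrArg Prod.snd h)
  rintro (_ | i) (_ | j) h
  · rfl
  · exact absurd h.symm (hne _)
  · exact absurd h (hne _)
  · exact congrArg some (hγ ((hφ.prodMap hφ) h))

lemma chord_surjective (c : {c // c ∈ diagram ℓ C}) :
    ∃ o : Option {c // c ∈ C}, chord ℓ Subtype.val o = c.1 := by
  rcases mem_insert.1 c.2 with h | h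
  · exact ⟨none, h.symm⟩
  · obtain ⟨p, hp, hpc⟩ := mem_image.1 h
    exact ⟨some ⟨p, hp⟩, hpc⟩

noncomputable def chordEquiv : Option {c // c ∈ C} ≃ {c // c ∈ diagram ℓ C} :=
  Equiv.ofBijective (fun o => ⟨_, chord_mem ℓ C o⟩)
    ⟨fun _ _ h => chord_injective ℓ Subtype.val_injective (congrArg Subtype.val h),
      fun c => (chord_surjective ℓ C c).imp fun _ h => Subtype.ext h⟩

variable {ℓ C}

lemma Gamma_diagram {d : ℕ} (hℓ0 : 0 ≤ ℓ) (hℓ : ℓ ≤ 2 * d) (b : Bool)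
    (s : {c // c ∈ C} → Bool) :
    Gamma (d + 1) (diagram ℓ C) (extendState (chordEquiv ℓ C) b s) =
      Gamma d C s + if b then 0 else 1 := by
  have hlabel : extendState (chordEquiv ℓ C) b s ∘ chordEquiv ℓ C = label b s :=
    funext fun o => by simp [extendState, label]
  rw [Gamma, stateGroup_eq_smoothingGroup _ (chordEquiv ℓ C), hlabel,
    show 2 * ((d + 1 : ℕ) : ℤ) = 2 * d + 2 by push_cast; ring]
  exact ncard_image_orbit (γ := Subtype.val) hℓ0 hℓ

end NegMonogon

open LaurentPolynomial in
theorem bracket_monogon_neg_general (d : ℕ) (C : Finset (ℤ × ℤ))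
    (ℓ : ℤ) (hℓ0 : 0 ≤ ℓ) (hℓ : ℓ ≤ 2 * d) :
    bracket (d + 1)
      (insert (ℓ + 2, ℓ + 1)
        (C.image fun p => ((if p.1 ≤ ℓ then p.1 else p.1 + 2),
                           (if p.2 ≤ ℓ then p.2 else p.2 + 2)))) =
      (-T (-3)) * bracket d C :=
  bracket_eq_of_Gamma_extendState (NegMonogon.chordEquiv ℓ C) (NegMonogon.Gamma_diagram hℓ0 hℓ)

open LaurentPolynomial in
/-- birth of a negative monogon: `⟨C₋^ℓ⟩ = (-A⁻³)·⟨C⟩`, where `C₋^ℓ` is obtained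
from `C` by replacing each entry `i` by `i` if `i ≤ ℓ` and by `i + 2` if `i > ℓ`, and
adjoining the negative chord `(ℓ+2, ℓ+1)`. -/
theorem bracket_monogon_neg (d : ℕ) (C : Finset (ℤ × ℤ)) (hC : IsOLCD d C)
    (ℓ : ℤ) (hℓ0 : 0 ≤ ℓ) (hℓ : ℓ ≤ 2 * d) :
    bracket (d + 1)
      (insert (ℓ + 2, ℓ + 1)
        (C.image fun p => ((if p.1 ≤ ℓ then p.1 else p.1 + 2),
                           (if p.2 ≤ ℓ then p.2 else p.2 + 2)))) =
      (-T (-3)) * bracket d C :=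
  bracket_monogon_neg_general d C ℓ hℓ0 hℓ
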